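/- arXiv:2210.01635 — 8 statements merged into one kernel-verified Lean document; each statement's English description precedes it below -/
import Mathlib

section
/- Let k ≥ 1 and consider a symbolic ratrec system of dimension k and degree D with defining sequences F^(1),…,F^(k) : ℕ → K. Then for every n ∈ ℕ and every i ∈ {1,…,k}, the rational function F^(i)_n has degree at most (k·D)^n, i.e. there exist polynomials G, C ∈ ℚ[x_1,…,x_k] with C ≠ 0, both of total degree at most (k·D)^n, such that F^(i)_n = G / C in K. -/
open MvPolynomial Finset

private lemma ratrec_aux (k D m : ℕ)
    (P : MvPolynomial (Fin k) ℚ) (hP : P.totalDegree ≤ D)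
    (g : Fin k → MvPolynomial (Fin k) ℚ) (c : MvPolynomial (Fin k) ℚ) (hc : c ≠ 0)
    (hg : ∀ j, (g j).totalDegree ≤ m) (hcd : c.totalDegree ≤ m)
    (F : Fin k → FractionRing (MvPolynomial (Fin k) ℚ))
    (hFj : ∀ j, F j = algebraMap (MvPolynomial (Fin k) ℚ) _ (g j)
        / algebraMap (MvPolynomial (Fin k) ℚ) _ c) :
    ∃ N : MvPolynomial (Fin k) ℚ, N.totalDegree ≤ D * m ∧
      algebraMap (MvPolynomial (Fin k) ℚ) (FractionRing (MvPolynomial (Fin k) ℚ)) N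
        = (algebraMap (MvPolynomial (Fin k) ℚ) (FractionRing (MvPolynomial (Fin k) ℚ)) c) ^ D
            * MvPolynomial.aeval F P := by
  classical
  set φ := algebraMap (MvPolynomial (Fin k) ℚ) (FractionRing (MvPolynomial (Fin k) ℚ)) with hφ
  have hc' : φ c ≠ 0 := by
    simpa [hφ, IsFractionRing.to_map_eq_zero_iff] using hc
  refine ⟨∑ e ∈ P.support,
      MvPolynomial.C (P.coeff e) * (∏ j, g j ^ e j) * c ^ (D - e.sum fun _ n => n), ?_, ?_⟩
  · refine (totalDegree_finset_sum _ _).trans (Finset.sup_le fun e he => ?_)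
    have hs : (e.sum fun _ n => n) ≤ D := (le_totalDegree he).trans hP
    have hsum : (e.sum fun _ n => n) = ∑ j, e j := Finsupp.sum_fintype _ _ (fun _ => rfl)
    calc (MvPolynomial.C (P.coeff e) * (∏ j, g j ^ e j)
            * c ^ (D - e.sum fun _ n => n)).totalDegree
        ≤ ((MvPolynomial.C (P.coeff e) * (∏ j, g j ^ e j)).totalDegree)
            + (c ^ (D - e.sum fun _ n => n)).totalDegree := totalDegree_mul _ _
      _ ≤ ((MvPolynomial.C (P.coeff e) : MvPolynomial (Fin k) ℚ).totalDegree
            + (∏ j, g j ^ e j).totalDegree)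
            + (D - e.sum fun _ n => n) * c.totalDegree :=
          add_le_add (totalDegree_mul _ _) (totalDegree_pow _ _)
      _ ≤ (0 + ∑ j, e j * m) + (D - e.sum fun _ n => n) * m := by
          refine add_le_add (add_le_add (le_of_eq (totalDegree_C _)) ?_)
            (Nat.mul_le_mul_left _ hcd)
          exact (totalDegree_finset_prod _ _).trans <| Finset.sum_le_sum fun j _ =>
            (totalDegree_pow _ _).trans (Nat.mul_le_mul_left _ (hg j))
      _ = D * m := by
          rw [zero_add, ← Finset.sum_mul, ← hsum, ← add_mul, Nat.add_sub_cancel' hs]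
  · conv_rhs => rw [P.as_sum, map_sum, Finset.mul_sum]
    rw [map_sum]
    refine Finset.sum_congr rfl fun e he => ?_
    have hs : (e.sum fun _ n => n) ≤ D := (le_totalDegree he).trans hP
    have hsum : (e.sum fun _ n => n) = ∑ j, e j := Finsupp.sum_fintype _ _ (fun _ => rfl)
    rw [map_mul, map_mul, map_pow, map_prod, aeval_monomial]
    have hCa : algebraMap ℚ (FractionRing (MvPolynomial (Fin k) ℚ)) (P.coeff e)
        = φ (MvPolynomial.C (P.coeff e)) := by
      rw [IsScalarTower.algebraMap_apply ℚ (MvPolynomial (Fin k) ℚ)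
        (FractionRing (MvPolynomial (Fin k) ℚ)), MvPolynomial.algebraMap_eq]
    have hprod : (e.prod fun j n => F j ^ n)
        = (∏ j, φ (g j) ^ e j) / φ c ^ (e.sum fun _ n => n) := by
      rw [Finsupp.prod_pow]
      simp only [hFj, div_pow]
      rw [Finset.prod_div_distrib, Finset.prod_pow_eq_pow_sum, hsum]
    have hpow : (φ c) ^ D = φ c ^ (D - e.sum fun _ n => n) * φ c ^ (e.sum fun _ n => n) := by
      rw [← pow_add, Nat.sub_add_cancel hs]
    rw [hprod, hpow, ← hCa]
    simp only [map_pow]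
    field_simp

/-- degree growth of the entries of a symbolic ratrec system:
`F^(i)_n` has degree at most `(k·D)^n`. -/
theorem symbolic_ratrec_degree_growth
    (k D : ℕ) (hk : 0 < k)
    (A B : Fin k → MvPolynomial (Fin k) ℚ)
    (hAdeg : ∀ i, (A i).totalDegree ≤ D) (hBdeg : ∀ i, (B i).totalDegree ≤ D)
    (F : Fin k → ℕ → FractionRing (MvPolynomial (Fin k) ℚ))
    (hF0 : ∀ i, F i 0 =
      algebraMap (MvPolynomial (Fin k) ℚ) (FractionRing (MvPolynomial (Fin k) ℚ))
        (MvPolynomial.X i))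
    (hBne : ∀ (n : ℕ) (i : Fin k),
      MvPolynomial.aeval (fun j => F j n) (B i) ≠ 0)
    (hrec : ∀ (n : ℕ) (i : Fin k),
      F i (n + 1) =
        MvPolynomial.aeval (fun j => F j n) (A i) /
          MvPolynomial.aeval (fun j => F j n) (B i)) :
    ∀ (n : ℕ) (i : Fin k),
      ∃ G C : MvPolynomial (Fin k) ℚ, C ≠ 0 ∧
        G.totalDegree ≤ (k * D) ^ n ∧ C.totalDegree ≤ (k * D) ^ n ∧
        F i n =
          algebraMap (MvPolynomial (Fin k) ℚ) (FractionRing (MvPolynomial (Fin k) ℚ)) G /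
            algebraMap (MvPolynomial (Fin k) ℚ) (FractionRing (MvPolynomial (Fin k) ℚ)) C := by
  classical
  set φ := algebraMap (MvPolynomial (Fin k) ℚ) (FractionRing (MvPolynomial (Fin k) ℚ)) with hφ
  have φne : ∀ {p : MvPolynomial (Fin k) ℚ}, p ≠ 0 → φ p ≠ 0 := fun {p} hp => by
    simpa [hφ, IsFractionRing.to_map_eq_zero_iff] using hp
  intro n
  induction n with
  | zero =>
    intro i
    refine ⟨MvPolynomial.X i, 1, one_ne_zero, ?_, ?_, ?_⟩
    · simpa using (MvPolynomial.totalDegree_X i (R := ℚ)).le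
    · simp
    · simp [hF0 i]
  | succ n IH =>
    intro i
    choose G C hC hGdeg hCdeg hFeq using IH
    set m : ℕ := (k * D) ^ n with hm
    set c : MvPolynomial (Fin k) ℚ := ∏ j, C j with hcdef
    have hcne : c ≠ 0 := Finset.prod_ne_zero_iff.2 fun j _ => hC j
    set g : Fin k → MvPolynomial (Fin k) ℚ :=
      fun j => G j * ∏ l ∈ Finset.univ.erase j, C l with hgdef
    have hk1 : k - 1 + 1 = k := Nat.succ_pred_eq_of_pos hk
    have hcd : c.totalDegree ≤ k * m := by
      refine (MvPolynomial.totalDegree_finset_prod _ _).trans ?_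
      calc ∑ j, (C j).totalDegree ≤ ∑ _j : Fin k, m := Finset.sum_le_sum fun j _ => hCdeg j
        _ = k * m := by simp [Finset.sum_const, mul_comm]
    have hgd : ∀ j, (g j).totalDegree ≤ k * m := by
      intro j
      refine (MvPolynomial.totalDegree_mul _ _).trans ?_
      have h2 : (∏ l ∈ Finset.univ.erase j, C l).totalDegree ≤ (k - 1) * m := by
        refine (MvPolynomial.totalDegree_finset_prod _ _).trans ?_
        calc ∑ l ∈ Finset.univ.erase j, (C l).totalDegree
            ≤ ∑ _l ∈ Finset.univ.erase j, m := Finset.sum_le_sum fun l _ => hCdeg l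
          _ = (k - 1) * m := by
              simp [Finset.sum_const, Finset.card_erase_of_mem, mul_comm]
      calc (G j).totalDegree + (∏ l ∈ Finset.univ.erase j, C l).totalDegree
          ≤ m + (k - 1) * m := add_le_add (hGdeg j) h2
        _ = (k - 1 + 1) * m := by ring
        _ = k * m := by rw [hk1]
    have hFj : ∀ j, F j n = φ (g j) / φ c := by
      intro j
      have hPne : φ (∏ l ∈ Finset.univ.erase j, C l) ≠ 0 :=
        φne (Finset.prod_ne_zero_iff.2 fun l _ => hC l)
      have hc2 : φ c = φ (C j) * φ (∏ l ∈ Finset.univ.erase j, C l) := by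
        rw [hcdef, ← map_mul, Finset.mul_prod_erase _ _ (Finset.mem_univ j)]
      have hPne' : (∏ l ∈ Finset.univ.erase j, φ (C l)) ≠ 0 :=
        Finset.prod_ne_zero_iff.2 fun l _ => φne (hC l)
      rw [hFeq j, hc2, hgdef, map_mul, map_prod, mul_div_mul_right _ _ hPne']
    obtain ⟨NA, hNAdeg, hNA⟩ := ratrec_aux k D (k * m) (A i) (hAdeg i) g c hcne hgd hcd
      (fun j => F j n) hFj
    obtain ⟨NB, hNBdeg, hNB⟩ := ratrec_aux k D (k * m) (B i) (hBdeg i) g c hcne hgd hcd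
      (fun j => F j n) hFj
    have hcD : (φ c) ^ D ≠ 0 := pow_ne_zero _ (φne hcne)
    have hNBne : NB ≠ 0 := by
      intro h
      apply hBne n i
      rw [h, map_zero] at hNB
      rcases mul_eq_zero.1 hNB.symm with h' | h'
      · exact absurd h' hcD
      · exact h'
    have hdeg : D * (k * m) = (k * D) ^ (n + 1) := by
      rw [hm, pow_succ]
      ring
    refine ⟨NA, NB, hNBne, hdeg ▸ hNAdeg, hdeg ▸ hNBdeg, ?_⟩
    rw [hrec n i, hNA, hNB, mul_div_mul_left _ _ hcD]
end

section
/- (Substitution lemma.) Let k ≥ 1 and consider a symbolic ratrec system of dimension k and degree D with defining sequences F^(1),…,F^(k) : ℕ → K. Fix i ∈ {1,…,k}, m ∈ ℕ, and a polynomial Z ∈ ℚ[y_0,…,y_m] such that Z(F^(i)_0, F^(i)_1, …, F^(i)_m) = 0 in K. Then Z(F^(i)_n, F^(i)_{n+1}, …, F^(i)_{n+m}) = 0 for all n ∈ ℕ. -/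
open MvPolynomial IsLocalization

section Aux

variable {k : ℕ} (F : Fin k → ℕ → FractionRing (MvPolynomial (Fin k) ℚ))

private abbrev RR (k : ℕ) := MvPolynomial (Fin k) ℚ
private abbrev KK (k : ℕ) := FractionRing (RR k)

/-- Polynomials that do not vanish anywhere along the orbit. -/
private noncomputable def orbM : Submonoid (RR k) where
  carrier := { P | ∀ n, MvPolynomial.aeval (fun j => F j n) P ≠ 0 }
  mul_mem' := by
    intro a b ha hb n
    simp only [Set.mem_setOf_eq, map_mul] at *
    exact mul_ne_zero (ha n) (hb n)
  one_mem' := by intro n; simp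

private abbrev SS := Localization (orbM F)

private lemma orbM_unit (n : ℕ) (p : orbM F) :
    IsUnit ((MvPolynomial.aeval (fun j => F j n) : RR k →ₐ[ℚ] KK k).toRingHom p) :=
  isUnit_iff_ne_zero.2 (p.2 n)

private noncomputable def evS (n : ℕ) : SS F →+* KK k :=
  IsLocalization.lift (M := orbM F) (S := SS F) (orbM_unit F n)

private lemma evS_mk (n : ℕ) (P : RR k) :
    evS F n (algebraMap (RR k) (SS F) P) = MvPolynomial.aeval (fun j => F j n) P :=
  IsLocalization.lift_eq (orbM_unit F n) P

end Aux

/-- Substitution lemma: an algebraic relation among the first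
`m+1` entries of a symbolic ratrec sequence propagates to all later windows. -/
theorem symbolic_ratrec_substitution
    (k D : ℕ) (hk : 0 < k)
    (A B : Fin k → MvPolynomial (Fin k) ℚ)
    (hAdeg : ∀ i, (A i).totalDegree ≤ D) (hBdeg : ∀ i, (B i).totalDegree ≤ D)
    (F : Fin k → ℕ → FractionRing (MvPolynomial (Fin k) ℚ))
    (hF0 : ∀ i, F i 0 =
      algebraMap (MvPolynomial (Fin k) ℚ) (FractionRing (MvPolynomial (Fin k) ℚ))
        (MvPolynomial.X i))
    (hBne : ∀ (n : ℕ) (i : Fin k),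
      MvPolynomial.aeval (fun j => F j n) (B i) ≠ 0)
    (hrec : ∀ (n : ℕ) (i : Fin k),
      F i (n + 1) =
        MvPolynomial.aeval (fun j => F j n) (A i) /
          MvPolynomial.aeval (fun j => F j n) (B i))
    (i : Fin k) (m : ℕ) (Z : MvPolynomial (Fin (m + 1)) ℚ)
    (hZ : MvPolynomial.aeval (fun j : Fin (m + 1) => F i (j : ℕ)) Z = 0) :
    ∀ n : ℕ, MvPolynomial.aeval (fun j : Fin (m + 1) => F i (n + j)) Z = 0 := by
  have hBmem : ∀ l : Fin k, B l ∈ orbM F := fun l n => hBne n l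
  -- the one-step substitution R → S
  let τ : RR k →ₐ[ℚ] SS F :=
    MvPolynomial.aeval (fun l => IsLocalization.mk' (SS F) (A l) ⟨B l, hBmem l⟩)
  -- evS n ∘ τ = aeval at time n+1
  have evτ : ∀ (n : ℕ) (P : RR k),
      evS F n (τ P) = MvPolynomial.aeval (fun j => F j (n + 1)) P := by
    intro n P
    have key : ((evS F n).toRatAlgHom.comp τ : RR k →ₐ[ℚ] KK k)
        = MvPolynomial.aeval (fun j => F j (n + 1)) := by
      apply MvPolynomial.algHom_ext
      intro l
      have h1 : evS F n (IsLocalization.mk' (SS F) (A l) ⟨B l, hBmem l⟩)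
          * MvPolynomial.aeval (fun j => F j n) (B l)
          = MvPolynomial.aeval (fun j => F j n) (A l) := by
        have h := congrArg (evS F n)
          (IsLocalization.mk'_spec (SS F) (A l) ⟨B l, hBmem l⟩)
        rw [map_mul, evS_mk, evS_mk] at h
        exact h
      have h2 : evS F n (IsLocalization.mk' (SS F) (A l) ⟨B l, hBmem l⟩)
          = F l (n + 1) := by
        rw [hrec n l, eq_div_iff (hBne n l)]; exact h1
      simpa [τ] using h2
    exact AlgHom.congr_fun key P
  -- τ maps the multiplicative set to units of S
  have hτunit : ∀ p : orbM F, IsUnit (τ.toRingHom p) := by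
    intro p
    obtain ⟨⟨a, q⟩, hs⟩ := IsLocalization.mk'_surjective (orbM F) (τ.toRingHom p)
    dsimp only at hs
    have ha : a ∈ orbM F := by
      intro n h0
      have h := congrArg (evS F n) (IsLocalization.mk'_spec (SS F) a q)
      rw [map_mul, evS_mk, evS_mk, hs, h0] at h
      have hτp : evS F n (τ.toRingHom p) ≠ 0 := by
        show evS F n (τ (p : RR k)) ≠ 0
        rw [evτ n p]
        exact p.2 (n + 1)
      exact hτp (by
        rcases mul_eq_zero.mp h with h' | h'
        · exact h'
        · exact absurd h' (q.2 n))
    rw [← hs]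
    exact IsUnit.of_mul_eq_one _ (IsLocalization.mk'_mul_mk'_eq_one' a q ha)
  -- the shift endomorphism of S
  let σ : SS F →+* SS F := IsLocalization.lift (M := orbM F) hτunit
  have σ_mk : ∀ P : RR k, σ (algebraMap (RR k) (SS F) P) = τ P :=
    fun P => IsLocalization.lift_eq hτunit P
  have ev_σ : ∀ (n : ℕ) (s : SS F), evS F n (σ s) = evS F (n + 1) s := by
    intro n
    have h : (evS F n).comp σ = evS F (n + 1) := by
      apply IsLocalization.ringHom_ext (orbM F)
      refine RingHom.ext fun P => ?_
      simp only [RingHom.comp_apply]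
      rw [σ_mk, evτ, evS_mk]
    exact fun s => RingHom.congr_fun h s
  -- evS 0 is injective
  have hev0 : ∀ s : SS F, evS F 0 s = 0 → s = 0 := by
    intro s h0
    obtain ⟨⟨a, q⟩, rfl⟩ := IsLocalization.mk'_surjective (orbM F) s
    have h := congrArg (evS F 0) (IsLocalization.mk'_spec (SS F) a q)
    rw [map_mul, evS_mk, evS_mk, h0, zero_mul] at h
    have hA0 : (MvPolynomial.aeval (fun j => F j 0) : RR k →ₐ[ℚ] KK k)
        = IsScalarTower.toAlgHom ℚ (RR k) (KK k) := by
      apply MvPolynomial.algHom_ext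
      intro l
      simp [hF0 l]
    rw [hA0] at h
    have ha : a = 0 := by
      apply IsFractionRing.injective (RR k) (KK k)
      simpa using h.symm
    rw [ha]; exact IsLocalization.mk'_zero q
  -- iterated shifts of the initial variable
  have hg : ∀ (n j : ℕ),
      evS F n (σ^[j] (algebraMap (RR k) (SS F) (MvPolynomial.X i))) = F i (n + j) := by
    intro n j
    induction j generalizing n with
    | zero => simp [evS_mk]
    | succ j ih =>
      rw [Function.iterate_succ_apply', ev_σ, ih (n + 1)]
      congr 1
      omega
  -- the universal relation in S
  have hw : MvPolynomial.aeval
      (fun j : Fin (m + 1) => σ^[(j : ℕ)] (algebraMap (RR k) (SS F) (MvPolynomial.X i)))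
      Z = 0 := by
    apply hev0
    have hca := MvPolynomial.comp_aeval_apply
      (f := fun j : Fin (m + 1) => σ^[(j : ℕ)] (algebraMap (RR k) (SS F) (MvPolynomial.X i)))
      ((evS F 0).toRatAlgHom) Z
    rw [show (evS F 0) ((MvPolynomial.aeval
        (fun j : Fin (m + 1) => σ^[(j : ℕ)] (algebraMap (RR k) (SS F) (MvPolynomial.X i)))) Z)
      = (evS F 0).toRatAlgHom ((MvPolynomial.aeval
        (fun j : Fin (m + 1) => σ^[(j : ℕ)] (algebraMap (RR k) (SS F) (MvPolynomial.X i)))) Z)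
      from rfl, hca]
    have : ∀ j : Fin (m + 1),
        (evS F 0).toRatAlgHom (σ^[(j : ℕ)] (algebraMap (RR k) (SS F) (MvPolynomial.X i)))
          = F i (j : ℕ) := by
      intro j
      have := hg 0 (j : ℕ)
      simpa using this
    simp only [this]
    exact hZ
  -- conclude
  intro n
  have h := congrArg ((evS F n).toRatAlgHom) hw
  have hca := MvPolynomial.comp_aeval_apply
    (f := fun j : Fin (m + 1) => σ^[(j : ℕ)] (algebraMap (RR k) (SS F) (MvPolynomial.X i)))
    ((evS F n).toRatAlgHom) Z
  rw [hca, map_zero] at h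
  have : ∀ j : Fin (m + 1),
      (evS F n).toRatAlgHom (σ^[(j : ℕ)] (algebraMap (RR k) (SS F) (MvPolynomial.X i)))
        = F i (n + (j : ℕ)) := fun j => hg n (j : ℕ)
  simp only [this] at h
  exact h
end

section
/- Every ratrec sequence over ℚ admits a cancelling polynomial: if u : ℕ → ℚ is ratrec, then there exist m ∈ ℕ and a nonzero polynomial P ∈ ℚ[y_0,…,y_m] such that P(u_n, u_{n+1}, …, u_{n+m}) = 0 for all n ∈ ℕ. -/
open MvPolynomial Finset

namespace RatRecAux

lemma le_sum_nat {m : ℕ} (e : Fin m →₀ ℕ) (i : Fin m) : e i ≤ e.sum fun _ x => x := by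
  by_cases h : i ∈ e.support
  · exact Finset.single_le_sum (fun _ _ => Nat.zero_le _) h
  · simp [Finsupp.notMem_support_iff.mp h]

lemma eval_homog {m : ℕ} (p : MvPolynomial (Fin m) ℚ) (t : ℕ)
    (ht : ∀ e ∈ p.support, (e.sum fun _ x => x) ≤ t)
    (c d : Fin m → ℚ) (hd : ∀ i, d i ≠ 0) :
    ∑ e ∈ p.support, p.coeff e * ∏ i, (c i ^ e i * d i ^ (t - e i))
      = eval (fun i => c i / d i) p * (∏ i, d i) ^ t := by
  rw [eval_eq', Finset.sum_mul]
  refine Finset.sum_congr rfl fun e he => ?_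
  have hei : ∀ i, e i ≤ t := fun i => le_trans (le_sum_nat e i) (ht e he)
  rw [mul_assoc]
  congr 1
  rw [← Finset.prod_pow, ← Finset.prod_mul_distrib]
  refine Finset.prod_congr rfl fun i _ => ?_
  have hdt : d i ^ t = d i ^ e i * d i ^ (t - e i) := by
    rw [← pow_add, Nat.add_sub_cancel' (hei i)]
  rw [hdt, div_pow, div_mul_eq_mul_div, mul_comm (d i ^ e i) (d i ^ (t - e i)),
    ← mul_assoc, mul_div_assoc, div_self (pow_ne_zero _ (hd i)), mul_one]

noncomputable def subst {k : ℕ} (p : MvPolynomial (Fin k) ℚ)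
    (Cc Dd : Fin k → MvPolynomial (Fin k) ℚ) : MvPolynomial (Fin k) ℚ :=
  ∑ e ∈ p.support, MvPolynomial.C (p.coeff e) *
    ∏ i, (Cc i ^ e i * Dd i ^ (p.totalDegree - e i))

lemma eval_subst {k : ℕ} (p : MvPolynomial (Fin k) ℚ)
    (Cc Dd : Fin k → MvPolynomial (Fin k) ℚ) (y : Fin k → ℚ)
    (hd : ∀ i, eval y (Dd i) ≠ 0) :
    eval y (subst p Cc Dd)
      = eval (fun i => eval y (Cc i) / eval y (Dd i)) p *
          (∏ i, eval y (Dd i)) ^ p.totalDegree := by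
  rw [subst, map_sum, ← eval_homog p p.totalDegree (fun e he => le_totalDegree he) _ _ hd]
  refine Finset.sum_congr rfl fun e he => ?_
  simp [map_prod]

noncomputable def St {k : ℕ} (A B : Fin k → MvPolynomial (Fin k) ℚ) :
    ℕ → (Fin k → MvPolynomial (Fin k) ℚ) × (Fin k → MvPolynomial (Fin k) ℚ)
  | 0 => ⟨fun i => X i, fun _ => 1⟩
  | j+1 =>
    ⟨fun i => subst (A i) (St A B j).1 (St A B j).2 *
        (∏ i', (St A B j).2 i') ^ (B i).totalDegree,
     fun i => (∏ i', (St A B j).2 i') ^ (A i).totalDegree *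
        subst (B i) (St A B j).1 (St A B j).2⟩

lemma St_invariant {k : ℕ} (U : Fin k → ℕ → ℚ)
    (A B : Fin k → MvPolynomial (Fin k) ℚ)
    (hrec : ∀ (n : ℕ) (i : Fin k), eval (fun j => U j n) (B i) ≠ 0 ∧
      U i (n + 1) = eval (fun j => U j n) (A i) / eval (fun j => U j n) (B i)) :
    ∀ (j n : ℕ) (i : Fin k), eval (fun j' => U j' n) ((St A B j).2 i) ≠ 0 ∧
      eval (fun j' => U j' n) ((St A B j).1 i)
        = U i (n + j) * eval (fun j' => U j' n) ((St A B j).2 i) := by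
  intro j
  induction j with
  | zero => intro n i; simp [St]
  | succ j ih =>
    intro n i
    set y : Fin k → ℚ := fun j' => U j' n with hy
    have hd : ∀ i', eval y ((St A B j).2 i') ≠ 0 := fun i' => (ih n i').1
    have hq : (fun i' => eval y ((St A B j).1 i') / eval y ((St A B j).2 i'))
        = fun i' => U i' (n + j) := by
      funext i'
      rw [(ih n i').2, mul_div_cancel_right₀ _ (hd i')]
    have hprod : (∏ i', eval y ((St A B j).2 i')) ≠ 0 :=
      Finset.prod_ne_zero_iff.2 fun i' _ => hd i'
    have hA : eval y (subst (A i) (St A B j).1 (St A B j).2)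
        = eval (fun j' => U j' (n + j)) (A i) *
            (∏ i', eval y ((St A B j).2 i')) ^ (A i).totalDegree := by
      rw [eval_subst _ _ _ _ hd, hq]
    have hB : eval y (subst (B i) (St A B j).1 (St A B j).2)
        = eval (fun j' => U j' (n + j)) (B i) *
            (∏ i', eval y ((St A B j).2 i')) ^ (B i).totalDegree := by
      rw [eval_subst _ _ _ _ hd, hq]
    obtain ⟨hBne, hval⟩ := hrec (n + j) i
    have hval' : U i (n + (j + 1))
        = eval (fun j' => U j' (n + j)) (A i) / eval (fun j' => U j' (n + j)) (B i) := hval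
    constructor
    · show eval y ((∏ i', (St A B j).2 i') ^ (A i).totalDegree *
        subst (B i) (St A B j).1 (St A B j).2) ≠ 0
      rw [map_mul, map_pow, map_prod, hB]
      exact mul_ne_zero (pow_ne_zero _ hprod) (mul_ne_zero hBne (pow_ne_zero _ hprod))
    · show eval y (subst (A i) (St A B j).1 (St A B j).2 *
          (∏ i', (St A B j).2 i') ^ (B i).totalDegree)
        = U i (n + (j + 1)) * eval y ((∏ i', (St A B j).2 i') ^ (A i).totalDegree *
            subst (B i) (St A B j).1 (St A B j).2)
      rw [map_mul, map_pow, map_prod, hA, map_mul, map_pow, map_prod, hB, hval']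
      field_simp

noncomputable def finBound (m t : ℕ) :
    Fintype {e : Fin m →₀ ℕ | (e.sum fun _ x => x) ≤ t} :=
  Fintype.ofInjective
    (fun e => (fun i => (⟨e.val i,
        Nat.lt_succ_of_le (le_trans (le_sum_nat e.val i) e.property)⟩ : Fin (t+1))
      : Fin m → Fin (t+1)))
    (fun e1 e2 h => Subtype.ext (Finsupp.ext fun i =>
      congrArg Fin.val (congrFun h i)))

lemma perron {k : ℕ} (Cj Dj : Fin (k+1) → MvPolynomial (Fin k) ℚ) :
    ∃ (N : ℕ) (P : MvPolynomial (Fin (k+1)) ℚ), P ≠ 0 ∧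
      (∀ e ∈ P.support, (e.sum fun _ x => x) ≤ N) ∧
      ∑ e ∈ P.support, P.coeff e • ∏ j, (Cj j ^ e j * Dj j ^ (N - e j)) = 0 := by
  classical
  set dd := Finset.univ.sup
    (fun j : Fin (k+1) => max (Cj j).totalDegree (Dj j).totalDegree) with hdd
  set a := (k+1)^2 * dd + 1 with ha
  set Q := a^k with hQ
  set N := (k+1) * Q with hN
  set M := (k+1) * N * dd with hM
  set g : (Fin (k+1) →₀ ℕ) → MvPolynomial (Fin k) ℚ :=
    fun e => if (e.sum fun _ x => x) ≤ N then ∏ j, (Cj j ^ e j * Dj j ^ (N - e j)) else 0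
    with hg
  have hgW : ∀ e, g e ∈ restrictTotalDegree (Fin k) ℚ M := by
    intro e
    rw [hg]
    dsimp only
    split_ifs with h
    · rw [mem_restrictTotalDegree]
      calc (∏ j, (Cj j ^ e j * Dj j ^ (N - e j))).totalDegree
          ≤ ∑ j, (Cj j ^ e j * Dj j ^ (N - e j)).totalDegree :=
            totalDegree_finset_prod _ _
        _ ≤ ∑ _j : Fin (k+1), N * dd := by
            refine Finset.sum_le_sum fun j _ => ?_
            have hej : e j ≤ N := le_trans (le_sum_nat e j) h
            have hsup := Finset.le_sup
              (f := fun j : Fin (k+1) => max (Cj j).totalDegree (Dj j).totalDegree)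
              (Finset.mem_univ j)
            have hC : (Cj j).totalDegree ≤ dd :=
              le_trans (le_max_left _ _) hsup
            have hD : (Dj j).totalDegree ≤ dd :=
              le_trans (le_max_right _ _) hsup
            calc (Cj j ^ e j * Dj j ^ (N - e j)).totalDegree
                ≤ (Cj j ^ e j).totalDegree + (Dj j ^ (N - e j)).totalDegree :=
                  totalDegree_mul _ _
              _ ≤ e j * (Cj j).totalDegree + (N - e j) * (Dj j).totalDegree :=
                  add_le_add (totalDegree_pow _ _) (totalDegree_pow _ _)
              _ ≤ e j * dd + (N - e j) * dd :=
                  add_le_add (Nat.mul_le_mul_left _ hC) (Nat.mul_le_mul_left _ hD)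
              _ = (e j + (N - e j)) * dd := (add_mul _ _ _).symm
              _ ≤ N * dd := Nat.mul_le_mul_right _ (by omega)
        _ = (k+1) * (N * dd) := by
            rw [Finset.sum_const, Finset.card_univ, Fintype.card_fin, smul_eq_mul]
        _ = M := by rw [hM]; ring
    · exact Submodule.zero_mem _
  haveI : Fintype {e : Fin (k+1) →₀ ℕ | (e.sum fun _ x => x) ≤ N} := finBound _ _
  haveI : Fintype {e : Fin k →₀ ℕ | (e.sum fun _ x => x) ≤ M} := finBound _ _
  have hcard1 : (Q+1)^(k+1)
      ≤ Fintype.card {e : Fin (k+1) →₀ ℕ | (e.sum fun _ x => x) ≤ N} := by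
    have hinj : Function.Injective (fun gq : Fin (k+1) → Fin (Q+1) =>
        (⟨Finsupp.equivFunOnFinite.symm (fun j => (gq j : ℕ)), by
          show ((Finsupp.equivFunOnFinite.symm fun j => (gq j : ℕ)).sum fun _ x => x) ≤ N
          rw [Finsupp.sum_fintype _ _ (fun _ => rfl)]
          calc ∑ j, (Finsupp.equivFunOnFinite.symm fun j' => ((gq j' : ℕ))) j
              = ∑ j, (gq j : ℕ) := by simp
            _ ≤ ∑ _j : Fin (k+1), Q :=
                Finset.sum_le_sum fun j _ => Nat.lt_succ_iff.mp (gq j).isLt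
            _ = (k+1) * Q := by
                rw [Finset.sum_const, Finset.card_univ, Fintype.card_fin, smul_eq_mul]
          ⟩ : {e : Fin (k+1) →₀ ℕ | (e.sum fun _ x => x) ≤ N})) := by
      intro g1 g2 h
      have h2 := congrArg (fun z => Finsupp.equivFunOnFinite
        (z : {e : Fin (k+1) →₀ ℕ | (e.sum fun _ x => x) ≤ N}).val) h
      simp only [Equiv.apply_symm_apply] at h2
      funext j
      exact Fin.val_injective (congrFun h2 j)
    calc (Q+1)^(k+1) = Fintype.card (Fin (k+1) → Fin (Q+1)) := by simp
      _ ≤ _ := Fintype.card_le_of_injective _ hinj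
  have hcard2 : Fintype.card {e : Fin k →₀ ℕ | (e.sum fun _ x => x) ≤ M}
      ≤ (M+1)^k := by
    have hinj : Function.Injective
        (fun e : {e : Fin k →₀ ℕ | (e.sum fun _ x => x) ≤ M} =>
          (fun i => (⟨e.val i,
            Nat.lt_succ_of_le (le_trans (le_sum_nat e.val i) e.property)⟩ : Fin (M+1))
          : Fin k → Fin (M+1))) :=
      fun e1 e2 h => Subtype.ext (Finsupp.ext fun i =>
        congrArg Fin.val (congrFun h i))
    calc Fintype.card {e : Fin k →₀ ℕ | (e.sum fun _ x => x) ≤ M}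
        ≤ Fintype.card (Fin k → Fin (M+1)) := Fintype.card_le_of_injective _ hinj
      _ = (M+1)^k := by simp
  have hrV : Module.finrank ℚ (restrictTotalDegree (Fin (k+1)) ℚ N)
      = Fintype.card {e : Fin (k+1) →₀ ℕ | (e.sum fun _ x => x) ≤ N} :=
    Module.finrank_eq_card_basis (basisRestrictSupport ℚ _)
  have hrW : Module.finrank ℚ (restrictTotalDegree (Fin k) ℚ M)
      = Fintype.card {e : Fin k →₀ ℕ | (e.sum fun _ x => x) ≤ M} :=
    Module.finrank_eq_card_basis (basisRestrictSupport ℚ _)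
  have hQ1 : 1 ≤ Q := Nat.one_le_pow _ _ (by omega)
  have hMQ : M = (k+1)^2 * dd * Q := by rw [hM, hN]; ring
  have hM1 : M + 1 ≤ a * Q := by
    have : a * Q = (k+1)^2 * dd * Q + Q := by rw [ha]; ring
    omega
  have hnum : (M+1)^k < (Q+1)^(k+1) :=
    calc (M+1)^k ≤ (a*Q)^k := Nat.pow_le_pow_left hM1 k
      _ = Q^(k+1) := by rw [mul_pow, ← hQ, ← pow_succ']
      _ < (Q+1)^(k+1) := Nat.pow_lt_pow_left (Nat.lt_succ_self Q) (Nat.succ_ne_zero k)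
  have hlt : Module.finrank ℚ (restrictTotalDegree (Fin k) ℚ M)
      < Module.finrank ℚ (restrictTotalDegree (Fin (k+1)) ℚ N) := by
    rw [hrV, hrW]
    exact lt_of_le_of_lt hcard2 (lt_of_lt_of_le hnum hcard1)
  have hmem : ∀ z : restrictTotalDegree (Fin (k+1)) ℚ N,
      ((Finsupp.linearCombination ℚ g).comp ((AddMonoidAlgebra.coeffLinearEquiv ℚ).toLinearMap.comp
        (restrictTotalDegree (Fin (k+1)) ℚ N).subtype)) z
        ∈ restrictTotalDegree (Fin k) ℚ M := by
    intro z
    have : Finsupp.linearCombination ℚ g (AddMonoidAlgebra.coeff (z : MvPolynomial (Fin (k+1)) ℚ))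
        = ∑ e ∈ (z : MvPolynomial (Fin (k+1)) ℚ).support,
            (z : MvPolynomial (Fin (k+1)) ℚ).coeff e • g e := by
      rw [Finsupp.linearCombination_apply]; rfl
    rw [LinearMap.comp_apply]
    show Finsupp.linearCombination ℚ g (AddMonoidAlgebra.coeff (z : MvPolynomial (Fin (k+1)) ℚ))
      ∈ restrictTotalDegree (Fin k) ℚ M
    rw [this]
    exact Submodule.sum_mem _ fun e _ => Submodule.smul_mem _ _ (hgW e)
  set Φ : restrictTotalDegree (Fin (k+1)) ℚ N →ₗ[ℚ] restrictTotalDegree (Fin k) ℚ M :=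
    LinearMap.codRestrict _ ((Finsupp.linearCombination ℚ g).comp ((AddMonoidAlgebra.coeffLinearEquiv ℚ).toLinearMap.comp
      (restrictTotalDegree (Fin (k+1)) ℚ N).subtype)) hmem with hΦ
  have hninj : ¬ Function.Injective Φ := fun hinj =>
    absurd (LinearMap.finrank_le_finrank_of_injective hinj) (not_le.mpr hlt)
  have hker : LinearMap.ker Φ ≠ ⊥ := fun h => hninj (LinearMap.ker_eq_bot.mp h)
  obtain ⟨z, hzker, hz0⟩ := (Submodule.ne_bot_iff _).mp hker
  refine ⟨N, (z : MvPolynomial (Fin (k+1)) ℚ), ?_, ?_, ?_⟩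
  · exact fun h => hz0 (Subtype.ext h)
  · intro e he
    exact le_trans (le_totalDegree he)
      ((mem_restrictTotalDegree _ _ _).mp z.property)
  · have h0 : Finsupp.linearCombination ℚ g (AddMonoidAlgebra.coeff (z : MvPolynomial (Fin (k+1)) ℚ)) = 0 := by
      have h := congrArg Subtype.val hzker
      rw [hΦ, LinearMap.codRestrict_apply, LinearMap.comp_apply] at h
      simpa using h
    have h1 : ∑ e ∈ (z : MvPolynomial (Fin (k+1)) ℚ).support,
        (z : MvPolynomial (Fin (k+1)) ℚ).coeff e • g e = 0 := by
      rw [← h0, Finsupp.linearCombination_apply]; rfl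
    rw [← h1]
    refine Finset.sum_congr rfl fun e he => ?_
    rw [hg]
    dsimp only
    rw [if_pos (le_trans (le_totalDegree he)
      ((mem_restrictTotalDegree _ _ _).mp z.property))]

end RatRecAux


/-- A sequence `u : ℕ → F` over a field `F` is ratrec of dimension `k` if there
are sequences `u^(1) = u, …, u^(k)` and polynomials `A_i, B_i` such that each
`u^(i)_{n+1} = A_i(u^(1)_n,…,u^(k)_n) / B_i(u^(1)_n,…,u^(k)_n)` with nonzero
denominators. -/
def IsRatRec {F : Type*} [Field F] (u : ℕ → F) : Prop :=
  ∃ (k : ℕ) (hk : 0 < k) (U : Fin k → ℕ → F)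
    (A B : Fin k → MvPolynomial (Fin k) F),
    (∀ n : ℕ, U ⟨0, hk⟩ n = u n) ∧
    ∀ (n : ℕ) (i : Fin k),
      MvPolynomial.eval (fun j => U j n) (B i) ≠ 0 ∧
      U i (n + 1) =
        MvPolynomial.eval (fun j => U j n) (A i) /
          MvPolynomial.eval (fun j => U j n) (B i)

/-- every ratrec sequence over ℚ admits a cancelling polynomial. -/
theorem ratrec_admits_cancelling_polynomial (u : ℕ → ℚ) (hu : IsRatRec u) :
    ∃ (m : ℕ) (P : MvPolynomial (Fin (m + 1)) ℚ), P ≠ 0 ∧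
      ∀ n : ℕ, MvPolynomial.eval (fun j : Fin (m + 1) => u (n + j)) P = 0 := by
  obtain ⟨k, hk, U, A, B, hU, hrec⟩ := hu
  obtain ⟨N, P, hP0, hsupp, hpoly⟩ := RatRecAux.perron
    (fun j : Fin (k+1) => (RatRecAux.St A B j).1 ⟨0, hk⟩)
    (fun j : Fin (k+1) => (RatRecAux.St A B j).2 ⟨0, hk⟩)
  refine ⟨k, P, hP0, fun n => ?_⟩
  have hinv := RatRecAux.St_invariant U A B hrec
  set y : Fin k → ℚ := fun j' => U j' n with hy
  set c : Fin (k+1) → ℚ := fun j => eval y ((RatRecAux.St A B j).1 ⟨0, hk⟩) with hc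
  set d : Fin (k+1) → ℚ := fun j => eval y ((RatRecAux.St A B j).2 ⟨0, hk⟩) with hd
  have hdne : ∀ j : Fin (k+1), d j ≠ 0 := fun j => (hinv j n ⟨0, hk⟩).1
  have hcd : ∀ j : Fin (k+1), c j / d j = u (n + j) := by
    intro j
    rw [hc, hd]
    dsimp only
    rw [(hinv j n ⟨0, hk⟩).2, hU (n + j), mul_div_cancel_right₀ _ (hinv j n ⟨0, hk⟩).1]
  have h2 := congrArg (eval y) hpoly
  rw [map_sum, map_zero] at h2
  have h3 : ∑ e ∈ P.support, P.coeff e * ∏ j, (c j ^ e j * d j ^ (N - e j)) = 0 := by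
    rw [← h2]
    refine Finset.sum_congr rfl fun e he => ?_
    rw [MvPolynomial.smul_eval, map_prod]
    congr 1
    refine Finset.prod_congr rfl fun j _ => ?_
    rw [map_mul, map_pow, map_pow]
  rw [RatRecAux.eval_homog P N hsupp c d hdne] at h3
  have h4 : eval (fun j => c j / d j) P = 0 := by
    rcases mul_eq_zero.mp h3 with h | h
    · exact h
    · exact absurd h (pow_ne_zero _ (Finset.prod_ne_zero_iff.2 fun j _ => hdne j))
  have heq : (fun j : Fin (k+1) => c j / d j) = fun j : Fin (k+1) => u (n + j) :=
    funext hcd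
  rw [heq] at h4
  exact h4
end

section
/- Every P-recursive sequence over ℚ is ratrec: let d ≥ 1, let P_0, …, P_d ∈ ℚ[x] be univariate polynomials such that P_d(n) ≠ 0 for every n ∈ ℕ, and let a : ℕ → ℚ be a sequence satisfying P_0(n)·a_n + P_1(n)·a_{n+1} + ⋯ + P_d(n)·a_{n+d} = 0 for all n ∈ ℕ. Then a is ratrec. -/
/-!
The state `(a_n, …, a_{n+d-1}, n)` evolves rationally: the first `d - 1` coordinates
shift, the counter `n` increases by one, and the recurrence expresses `a_{n+d}` as a
polynomial in the window and `n` divided by `P_d(n)`, which never vanishes.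
-/

open MvPolynomial

variable {F : Type*} [Field F]

def windowState (a : ℕ → F) (d n : ℕ) : Fin (d + 1) → F :=
  fun i => if (i : ℕ) < d then a (n + i) else n

lemma windowState_of_lt (a : ℕ → F) {d : ℕ} (n : ℕ) {i : Fin (d + 1)} (hi : (i : ℕ) < d) :
    windowState a d n i = a (n + i) :=
  if_pos hi

@[simp]
lemma windowState_castSucc (a : ℕ → F) {d : ℕ} (n : ℕ) (j : Fin d) :
    windowState a d n j.castSucc = a (n + j) :=
  windowState_of_lt a n j.isLt

@[simp]
lemma windowState_last (a : ℕ → F) (d n : ℕ) : windowState a d n (Fin.last d) = n :=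
  if_neg (lt_irrefl d)

lemma eval_aeval_X {R σ : Type*} [CommSemiring R] (x : σ → R) (i : σ) (p : Polynomial R) :
    eval x (Polynomial.aeval (X i) p) = p.eval (x i) := by
  change aeval x (Polynomial.aeval (X i) p) = _
  rw [← Polynomial.aeval_algHom_apply, aeval_X, Polynomial.coe_aeval_eq_eval]

theorem IsRatRec.of_window_recurrence {d : ℕ} (hd : 0 < d) (a : ℕ → F)
    (A B : MvPolynomial (Fin (d + 1)) F) (hB : ∀ n, eval (windowState a d n) B ≠ 0)
    (hrec : ∀ n, a (n + d) = eval (windowState a d n) A / eval (windowState a d n) B) :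
    IsRatRec a := by
  refine ⟨d + 1, d.succ_pos, fun i n => windowState a d n i,
    fun i => if h : (i : ℕ) + 1 < d then X ⟨i + 1, by omega⟩
      else if (i : ℕ) + 1 = d then A else X (Fin.last d) + 1,
    fun i => if (i : ℕ) + 1 = d then B else 1, fun n => windowState_of_lt a n hd, ?_⟩
  intro n i
  rcases lt_trichotomy ((i : ℕ) + 1) d with hshift | hnew | hcounter
  · have hi : (i : ℕ) < d := by omega
    simp only [dif_pos hshift, if_neg hshift.ne, eval_X, map_one, div_one, ne_eq,
      one_ne_zero, not_false_eq_true, true_and]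
    rw [windowState_of_lt a _ hi, windowState_of_lt a _ hshift, add_right_comm, add_assoc]
  · have hi : (i : ℕ) < d := by omega
    simp only [dif_neg hnew.not_lt, if_pos hnew]
    refine ⟨hB n, ?_⟩
    rw [windowState_of_lt a _ hi, add_right_comm, add_assoc, hnew]
    exact hrec n
  · simp only [dif_neg (by omega : ¬(i : ℕ) + 1 < d), if_neg hcounter.ne', map_add, eval_X,
      map_one, div_one, ne_eq, one_ne_zero, not_false_eq_true, true_and]
    obtain rfl : i = Fin.last d := Fin.eq_last_of_not_lt (by omega)
    simp only [windowState_last, Nat.cast_succ]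

theorem IsRatRec.of_pRecursive {d : ℕ} (hd : 0 < d) (P : Fin (d + 1) → Polynomial F)
    (hPd : ∀ n : ℕ, (P (Fin.last d)).eval (n : F) ≠ 0) (a : ℕ → F)
    (ha : ∀ n : ℕ, ∑ j : Fin (d + 1), (P j).eval (n : F) * a (n + j) = 0) :
    IsRatRec a := by
  refine IsRatRec.of_window_recurrence hd a
    (-∑ j : Fin d, Polynomial.aeval (X (Fin.last d)) (P j.castSucc) * X j.castSucc)
    (Polynomial.aeval (X (Fin.last d)) (P (Fin.last d))) (fun n => ?_) (fun n => ?_)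
  · simpa [eval_aeval_X] using hPd n
  · have hsplit := ha n
    rw [Fin.sum_univ_castSucc] at hsplit
    simp only [Fin.val_castSucc, Fin.val_last] at hsplit
    simp only [map_neg, map_sum, map_mul, eval_aeval_X, eval_X, windowState_castSucc,
      windowState_last]
    rw [eq_div_iff (hPd n)]
    linear_combination hsplit

/-- every P-recursive sequence over ℚ is ratrec. -/
theorem p_recursive_is_ratrec
    (d : ℕ) (hd : 0 < d) (P : Fin (d + 1) → Polynomial ℚ)
    (hPd : ∀ n : ℕ, (P (Fin.last d)).eval (n : ℚ) ≠ 0)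
    (a : ℕ → ℚ)
    (ha : ∀ n : ℕ, ∑ j : Fin (d + 1), (P j).eval (n : ℚ) * a (n + j) = 0) :
    IsRatRec a :=
  IsRatRec.of_pRecursive hd P hPd a ha
end

section
/- Let d ≥ 1 and let P(x) = x·(x−1)⋯(x−d+1) ∈ ℚ[x] be the falling factorial polynomial of degree d. Then the following identity holds in ℚ[x]: P(x+2)·(P(x+1) + (d−1)·P(x)) = P(x+1)·((d+1)·P(x+1) − P(x)). Equivalently, the sequence of polynomials û_n = P(x+n) satisfies û_{n+2} = R(û_n, û_{n+1}) in ℚ(x), where R(y_0, y_1) = y_1·((d+1)·y_1 − y_0)/(y_1 + (d−1)·y_0). -/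
/-!
The shift `P ↦ P(x+1)` acts on the falling factorial by a rational factor:
`P(x+1)·(x−d+1) = (x+1)·P(x)`, both sides being the falling factorial of degree `d+1` at `x+1`.
Applying this at `x` and at `x+1` expresses `P(x+1)` and `P(x+2)` as rational multiples of `P(x)`,
and after clearing the denominators `(x−d+1)(x−d+2)` the identity reduces to
`(x+2)·d(x+2−d) = (x−d+2)·d(x+2)`.
-/

open Polynomial

theorem descPochhammer_eq_prod_range {R : Type*} [CommRing R] (n : ℕ) :
    descPochhammer R n = ∏ j ∈ Finset.range n, (X - C (j : R)) := by
  induction n with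
  | zero => simp
  | succ n ih => rw [descPochhammer_succ_right, ih, Finset.prod_range_succ, map_natCast]

theorem descPochhammer_comp_X_add_one_mul {R : Type*} [CommRing R] (n : ℕ) :
    (descPochhammer R n).comp (X + 1) * (X - (n : R[X]) + 1) = (X + 1) * descPochhammer R n := by
  have h := congrArg (·.comp (X + 1 : R[X]))
    ((descPochhammer_succ_left R n).symm.trans (descPochhammer_succ_right R n))
  simp only [mul_comp, X_comp, comp_assoc, sub_comp, one_comp, natCast_comp,
    add_sub_cancel_right, comp_X] at h
  rw [h, sub_add_eq_add_sub]

theorem recurrence_of_shift_relations {A : Type*} [CommRing A] [IsDomain A] {x c p q r : A}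
    (h₁ : x - c + 1 ≠ 0) (h₂ : x - c + 2 ≠ 0)
    (hshift₁ : q * (x - c + 1) = (x + 1) * p) (hshift₂ : r * (x - c + 2) = (x + 2) * q) :
    r * (q + (c - 1) * p) = q * ((c + 1) * q - p) := by
  refine mul_left_cancel₀ (mul_ne_zero h₁ h₂) ?_
  linear_combination
    (x - c + 1) * (q + (c - 1) * p) * hshift₂ + (x + 2 - (x - c + 2) * (c + 1)) * q * hshift₁

theorem falling_factorial_identity_general (d : ℕ)
    (P : Polynomial ℚ)
    (hP : P = ∏ j ∈ Finset.range d, (Polynomial.X - Polynomial.C (j : ℚ))) :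
    P.comp (Polynomial.X + Polynomial.C 2) *
        (P.comp (Polynomial.X + Polynomial.C 1) + Polynomial.C ((d : ℚ) - 1) * P) =
      P.comp (Polynomial.X + Polynomial.C 1) *
        (Polynomial.C ((d : ℚ) + 1) * P.comp (Polynomial.X + Polynomial.C 1) - P) := by
  rw [← descPochhammer_eq_prod_range] at hP
  subst hP
  have hshift₁ := descPochhammer_comp_X_add_one_mul (R := ℚ) d
  have hshift₂ := congrArg (·.comp (X + 1 : ℚ[X])) hshift₁
  simp only [mul_comp, add_comp, sub_comp, X_comp, one_comp, natCast_comp, comp_assoc] at hshift₂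
  have hX2 : (X + 1 + 1 : ℚ[X]) = X + C 2 := by rw [C_ofNat]; ring
  simp only [map_sub, map_add, map_natCast, map_one]
  refine recurrence_of_shift_relations (x := X) ?_ ?_ hshift₁
    (by rw [← hX2]; linear_combination hshift₂)
  all_goals exact fun h => by simpa using congrArg (eval (d : ℚ)) h

/-- for the falling factorial polynomial
`P(x) = x(x−1)⋯(x−d+1)` of degree `d ≥ 1`, the identity
`P(x+2)·(P(x+1) + (d−1)·P(x)) = P(x+1)·((d+1)·P(x+1) − P(x))` holds in `ℚ[x]`. -/
theorem falling_factorial_identity (d : ℕ) (hd : 0 < d)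
    (P : Polynomial ℚ)
    (hP : P = ∏ j ∈ Finset.range d, (Polynomial.X - Polynomial.C (j : ℚ))) :
    P.comp (Polynomial.X + Polynomial.C 2) *
        (P.comp (Polynomial.X + Polynomial.C 1) + Polynomial.C ((d : ℚ) - 1) * P) =
      P.comp (Polynomial.X + Polynomial.C 1) *
        (Polynomial.C ((d : ℚ) + 1) * P.comp (Polynomial.X + Polynomial.C 1) - P) :=
  falling_factorial_identity_general d P hP
end

section
/- Let 𝔽 be a finite field with m elements, let k ≥ 1, and let u^(1), …, u^(k) : ℕ → 𝔽 be sequences satisfying a polyrec system: there are polynomials P_1, …, P_k ∈ 𝔽[x_1,…,x_k] with u^(i)_{n+1} = P_i(u^(1)_n, …, u^(k)_n) for all n ∈ ℕ and each i. Then u^(1)_n = 0 for all n ∈ ℕ if, and only if, u^(1)_n = 0 for all n ≤ m^k. -/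
/-!
The state vector `(u⁽¹⁾ₙ, …, u⁽ᵏ⁾ₙ)` is the `n`-th iterate of the polynomial map
`v ↦ (P₁(v), …, Pₖ(v))` on the finite set `𝔽ᵏ` of size `m^k`. By pigeonhole two of the first
`m^k + 1` states coincide, after which the orbit is periodic, so every state of the orbit already
occurs among the first `m^k` of them.
-/

namespace Function

variable {α : Type*}

theorem iterate_eq_of_succ_eq {f : α → α} {s : ℕ → α} (hs : ∀ n, s (n + 1) = f (s n)) (n : ℕ) :
    s n = f^[n] (s 0) := by
  induction n with
  | zero => rfl
  | succ n ih => rw [hs, ih, iterate_succ_apply']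

theorem exists_lt_iterate_eq_of_iterate_eq {f : α → α} {x : α} {a b : ℕ} (hab : a < b)
    (h : f^[a] x = f^[b] x) (n : ℕ) : ∃ j < b, f^[n] x = f^[j] x := by
  rcases lt_or_ge n b with hnb | hbn
  · exact ⟨n, hnb, rfl⟩
  have hper : IsPeriodicPt f (b - a) (f^[a] x) := by
    rw [IsPeriodicPt, IsFixedPt, ← iterate_add_apply, Nat.sub_add_cancel hab.le, h]
  refine ⟨(n - a) % (b - a) + a, ?_, ?_⟩
  · have := Nat.mod_lt (n - a) (Nat.sub_pos_of_lt hab)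
    omega
  · rw [iterate_add_apply, hper.iterate_mod_apply, ← iterate_add_apply, Nat.sub_add_cancel]
    omega

theorem exists_lt_card_iterate_eq [Fintype α] (f : α → α) (x : α) (n : ℕ) :
    ∃ j < Fintype.card α, f^[n] x = f^[j] x := by
  obtain ⟨a, b, hne, hab⟩ := Fintype.exists_ne_map_eq_of_card_lt
    (fun i : Fin (Fintype.card α + 1) => f^[i] x) (by simp)
  rcases Fin.lt_or_lt_of_ne hne with hlt | hlt
  · obtain ⟨j, hj, hn⟩ := exists_lt_iterate_eq_of_iterate_eq hlt hab n
    exact ⟨j, by omega, hn⟩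
  · obtain ⟨j, hj, hn⟩ := exists_lt_iterate_eq_of_iterate_eq hlt hab.symm n
    exact ⟨j, by omega, hn⟩

end Function

/-- for a polyrec system over a finite field with `m` elements,
the first sequence is identically zero iff its first `m^k + 1` values are zero. -/
theorem polyrec_zeroness_finite_field
    (F : Type*) [Field F] [Fintype F]
    (k : ℕ) (hk : 0 < k)
    (U : Fin k → ℕ → F) (P : Fin k → MvPolynomial (Fin k) F)
    (hrec : ∀ (n : ℕ) (i : Fin k),
      U i (n + 1) = MvPolynomial.eval (fun j => U j n) (P i)) :
    (∀ n : ℕ, U ⟨0, hk⟩ n = 0) ↔ (∀ n : ℕ, n ≤ Fintype.card F ^ k → U ⟨0, hk⟩ n = 0) := by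
  refine ⟨fun h n _ => h n, fun h n => ?_⟩
  let step : (Fin k → F) → Fin k → F := fun v i => MvPolynomial.eval v (P i)
  have horbit : ∀ n, (fun i => U i n) = step^[n] (fun i => U i 0) :=
    Function.iterate_eq_of_succ_eq fun n => funext (hrec n)
  obtain ⟨j, hj, hnj⟩ := Function.exists_lt_card_iterate_eq step (fun i => U i 0) n
  rw [Fintype.card_fun, Fintype.card_fin] at hj
  have hU : U ⟨0, hk⟩ n = U ⟨0, hk⟩ j := by
    simpa only [← horbit] using congrFun hnj ⟨0, hk⟩
  rw [hU, h j hj.le]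
end

section
/- The class of ratrec sequences over a field 𝔽 is closed under pointwise sum: if u : ℕ → 𝔽 and v : ℕ → 𝔽 are both ratrec, then the sequence w : ℕ → 𝔽 defined by w_n = u_n + v_n is ratrec. -/
private def emb1 (k1 k2 : ℕ) : Fin k1 → Fin (1 + k1 + k2) :=
  fun j => ⟨1 + j, by have := j.isLt; omega⟩

private def emb2 (k1 k2 : ℕ) : Fin k2 → Fin (1 + k1 + k2) :=
  fun j => ⟨1 + k1 + j, by have := j.isLt; omega⟩

private def combSeq {F : Type*} [Field F] (k1 k2 : ℕ) (u v : ℕ → F)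
    (U : Fin k1 → ℕ → F) (V : Fin k2 → ℕ → F) :
    Fin (1 + k1 + k2) → ℕ → F := fun i n =>
  if h : (i : ℕ) = 0 then u n + v n
  else if h2 : (i : ℕ) < 1 + k1 then U ⟨(i : ℕ) - 1, by omega⟩ n
  else V ⟨(i : ℕ) - 1 - k1, by have := i.isLt; omega⟩ n

private noncomputable def combPoly {F : Type*} [Field F] {k1 k2 : ℕ}
    (top : MvPolynomial (Fin (1 + k1 + k2)) F)
    (P : Fin k1 → MvPolynomial (Fin k1) F)
    (Q : Fin k2 → MvPolynomial (Fin k2) F) :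
    Fin (1 + k1 + k2) → MvPolynomial (Fin (1 + k1 + k2)) F := fun i =>
  if h : (i : ℕ) = 0 then top
  else if h2 : (i : ℕ) < 1 + k1 then
    MvPolynomial.rename (emb1 k1 k2) (P ⟨(i : ℕ) - 1, by omega⟩)
  else MvPolynomial.rename (emb2 k1 k2) (Q ⟨(i : ℕ) - 1 - k1, by have := i.isLt; omega⟩)

private lemma combSeq_emb1 {F : Type*} [Field F] (k1 k2 : ℕ) (u v : ℕ → F)
    (U : Fin k1 → ℕ → F) (V : Fin k2 → ℕ → F) (j : Fin k1) (n : ℕ) :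
    combSeq k1 k2 u v U V (emb1 k1 k2 j) n = U j n := by
  have hj := j.isLt
  unfold combSeq
  rw [dif_neg (show ¬ ((emb1 k1 k2 j : ℕ) = 0) by simp only [emb1]; omega),
    dif_pos (show (emb1 k1 k2 j : ℕ) < 1 + k1 by simp only [emb1]; omega)]
  congr 1
  exact Fin.ext (by show 1 + (j : ℕ) - 1 = (j : ℕ); omega)

private lemma combSeq_emb2 {F : Type*} [Field F] (k1 k2 : ℕ) (u v : ℕ → F)
    (U : Fin k1 → ℕ → F) (V : Fin k2 → ℕ → F) (j : Fin k2) (n : ℕ) :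
    combSeq k1 k2 u v U V (emb2 k1 k2 j) n = V j n := by
  have hj := j.isLt
  unfold combSeq
  rw [dif_neg (show ¬ ((emb2 k1 k2 j : ℕ) = 0) by simp only [emb2]; omega),
    dif_neg (show ¬ ((emb2 k1 k2 j : ℕ) < 1 + k1) by simp only [emb2]; omega)]
  congr 1
  exact Fin.ext (by show 1 + k1 + (j : ℕ) - 1 - k1 = (j : ℕ); omega)

/-- ratrec sequences are closed under pointwise sum. -/
theorem isRatRec_add {F : Type*} [Field F] (u v : ℕ → F)
    (hu : IsRatRec u) (hv : IsRatRec v) :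
    IsRatRec (fun n => u n + v n) := by
  obtain ⟨k1, hk1, U, A, B, hU0, hUrec⟩ := hu
  obtain ⟨k2, hk2, V, C, D, hV0, hVrec⟩ := hv
  have hK0 : 0 < 1 + k1 + k2 := by omega
  refine ⟨1 + k1 + k2, hK0, combSeq k1 k2 u v U V,
    combPoly (MvPolynomial.rename (emb1 k1 k2) (A ⟨0, hk1⟩) *
        MvPolynomial.rename (emb2 k1 k2) (D ⟨0, hk2⟩) +
      MvPolynomial.rename (emb2 k1 k2) (C ⟨0, hk2⟩) *
        MvPolynomial.rename (emb1 k1 k2) (B ⟨0, hk1⟩)) A C,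
    combPoly (MvPolynomial.rename (emb1 k1 k2) (B ⟨0, hk1⟩) *
        MvPolynomial.rename (emb2 k1 k2) (D ⟨0, hk2⟩)) B D,
    ?_, ?_⟩
  · intro n
    simp [combSeq]
  · intro n i
    have hc1 : ∀ p : MvPolynomial (Fin k1) F,
        MvPolynomial.eval (fun j => combSeq k1 k2 u v U V j n)
            (MvPolynomial.rename (emb1 k1 k2) p) =
          MvPolynomial.eval (fun j => U j n) p := by
      intro p
      rw [MvPolynomial.eval_rename]
      have he : ((fun j => combSeq k1 k2 u v U V j n) ∘ emb1 k1 k2) = fun j => U j n :=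
        funext fun j => combSeq_emb1 k1 k2 u v U V j n
      rw [he]
    have hc2 : ∀ p : MvPolynomial (Fin k2) F,
        MvPolynomial.eval (fun j => combSeq k1 k2 u v U V j n)
            (MvPolynomial.rename (emb2 k1 k2) p) =
          MvPolynomial.eval (fun j => V j n) p := by
      intro p
      rw [MvPolynomial.eval_rename]
      have he : ((fun j => combSeq k1 k2 u v U V j n) ∘ emb2 k1 k2) = fun j => V j n :=
        funext fun j => combSeq_emb2 k1 k2 u v U V j n
      rw [he]
    rcases eq_or_ne (i : ℕ) 0 with hi | hi
    · obtain ⟨hb, hu1⟩ := hUrec n ⟨0, hk1⟩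
      obtain ⟨hd, hv1⟩ := hVrec n ⟨0, hk2⟩
      have hPA : combPoly (MvPolynomial.rename (emb1 k1 k2) (A ⟨0, hk1⟩) *
          MvPolynomial.rename (emb2 k1 k2) (D ⟨0, hk2⟩) +
          MvPolynomial.rename (emb2 k1 k2) (C ⟨0, hk2⟩) *
          MvPolynomial.rename (emb1 k1 k2) (B ⟨0, hk1⟩)) A C i =
          MvPolynomial.rename (emb1 k1 k2) (A ⟨0, hk1⟩) *
          MvPolynomial.rename (emb2 k1 k2) (D ⟨0, hk2⟩) +
          MvPolynomial.rename (emb2 k1 k2) (C ⟨0, hk2⟩) *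
          MvPolynomial.rename (emb1 k1 k2) (B ⟨0, hk1⟩) := dif_pos hi
      have hPB : combPoly (MvPolynomial.rename (emb1 k1 k2) (B ⟨0, hk1⟩) *
          MvPolynomial.rename (emb2 k1 k2) (D ⟨0, hk2⟩)) B D i =
          MvPolynomial.rename (emb1 k1 k2) (B ⟨0, hk1⟩) *
          MvPolynomial.rename (emb2 k1 k2) (D ⟨0, hk2⟩) := dif_pos hi
      have hW : combSeq k1 k2 u v U V i (n + 1) = u (n + 1) + v (n + 1) := dif_pos hi
      constructor
      · rw [hPB, map_mul, hc1, hc2]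
        exact mul_ne_zero hb hd
      · rw [hW, hPA, hPB, map_mul, map_add, map_mul, map_mul, hc1, hc1, hc2, hc2,
          ← hU0, ← hV0, hu1, hv1, div_add_div _ _ hb hd]
        ring_nf
    · rcases lt_or_ge (i : ℕ) (1 + k1) with h2 | h2
      · obtain ⟨hb, hu1⟩ := hUrec n ⟨(i : ℕ) - 1, by omega⟩
        have hPA : ∀ (P : Fin k1 → MvPolynomial (Fin k1) F)
            (Q : Fin k2 → MvPolynomial (Fin k2) F) t,
            combPoly t P Q i =
              MvPolynomial.rename (emb1 k1 k2) (P ⟨(i : ℕ) - 1, by omega⟩) := by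
          intro P Q t
          simp only [combPoly]
          rw [dif_neg hi, dif_pos h2]
        have hW : combSeq k1 k2 u v U V i (n + 1) = U ⟨(i : ℕ) - 1, by omega⟩ (n + 1) := by
          simp only [combSeq]
          rw [dif_neg hi, dif_pos h2]
        constructor
        · rw [hPA, hc1]
          exact hb
        · rw [hW, hPA, hPA, hc1, hc1]
          exact hu1
      · have hi2 : ¬ (i : ℕ) < 1 + k1 := by omega
        obtain ⟨hd, hv1⟩ := hVrec n ⟨(i : ℕ) - 1 - k1, by have := i.isLt; omega⟩
        have hPA : ∀ (P : Fin k1 → MvPolynomial (Fin k1) F)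
            (Q : Fin k2 → MvPolynomial (Fin k2) F) t,
            combPoly t P Q i =
              MvPolynomial.rename (emb2 k1 k2)
                (Q ⟨(i : ℕ) - 1 - k1, by have := i.isLt; omega⟩) := by
          intro P Q t
          simp only [combPoly]
          rw [dif_neg hi, dif_neg hi2]
        have hW : combSeq k1 k2 u v U V i (n + 1) =
            V ⟨(i : ℕ) - 1 - k1, by have := i.isLt; omega⟩ (n + 1) := by
          simp only [combSeq]
          rw [dif_neg hi, dif_neg hi2]
        constructor
        · rw [hPA, hc2]
          exact hd
        · rw [hW, hPA, hPA, hc2, hc2]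
          exact hv1
end

section
/- Let 𝔼 ⊆ 𝔾 be a field extension that is finitely generated as a field extension, i.e. there exist g_1, …, g_n ∈ 𝔾 such that 𝔾 = 𝔼(g_1, …, g_n). Then every subextension is finitely generated: for every intermediate field 𝔽 with 𝔼 ⊆ 𝔽 ⊆ 𝔾, there exist f_1, …, f_m ∈ 𝔽 such that 𝔽 = 𝔼(f_1, …, f_m). -/
open Polynomial IntermediateField

set_option maxHeartbeats 1000000

/-- Evaluation of a polynomial with coefficients in an intermediate field, at a point of the
intermediate field, stays in the intermediate field. -/
lemma evalMemHelper {K G : Type*} [Field K] [Field G] [Algebra K G]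
    (M : IntermediateField K G) {P : Polynomial G} (hc : ∀ i, P.coeff i ∈ M)
    {x : G} (hx : x ∈ M) : P.eval x ∈ M := by
  rw [Polynomial.eval_eq_sum_range]
  exact sum_mem fun i _ => mul_mem (hc i) (pow_mem hx i)

/-- Key lemma: if `F` is an intermediate field of `G/E`, `x : G`, and `S` is a finite set
such that every element of `S` lies in `F(x)` and `F ⊆ E(x, S)`, then `F` is finitely
generated over `E`. -/
lemma key_lemma {E G : Type*} [Field E] [Field G] [Algebra E G]
    (F : IntermediateField E G) (x : G) (S : Set G) (hSfin : S.Finite)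
    (h1 : ∀ h ∈ S, h ∈ adjoin (↥F) ({x} : Set G))
    (h2 : F ≤ adjoin E (insert x S)) :
    ∃ T : Set G, T.Finite ∧ adjoin E T = F := by
  classical
  choose! p q hpq using fun h hh => (mem_adjoin_simple_iff (F := ↥F) h).mp (h1 h hh)
  set μ := minpoly (↥F) x with hμdef
  -- the set of (coercions to `G` of) coefficients of a polynomial over `↥F`
  have cs_ex : ∃ cs : Polynomial (↥F) → Set G, (∀ r, (cs r).Finite) ∧
      (∀ r, cs r ⊆ (F : Set G)) ∧ (∀ r i, ((r.coeff i : ↥F) : G) ∈ cs r ∪ {0}) := by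
    refine ⟨fun r => (fun i => ((r.coeff i : ↥F) : G)) '' Set.Iic r.natDegree,
      fun r => (Set.finite_Iic _).image _, ?_, ?_⟩
    · rintro r _ ⟨i, -, rfl⟩; exact (r.coeff i).2
    · intro r i
      by_cases hi : i ≤ r.natDegree
      · exact Or.inl ⟨i, hi, rfl⟩
      · right
        rw [r.coeff_eq_zero_of_natDegree_lt (lt_of_not_ge hi)]
        simp
  obtain ⟨cs, cs_fin, cs_subF, cs_coeff⟩ := cs_ex
  set C : Set G := (⋃ h ∈ S, cs (p h) ∪ cs (q h)) ∪ cs μ with hCdef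
  have hCfin : C.Finite :=
    (Set.Finite.biUnion hSfin fun h _ => ((cs_fin _).union (cs_fin _))).union (cs_fin μ)
  have hCF : C ⊆ (F : Set G) := by
    rintro c (hc | hc)
    · simp only [Set.mem_iUnion] at hc
      obtain ⟨h, _, hc⟩ := hc
      rcases hc with hc | hc <;> exact cs_subF _ hc
    · exact cs_subF _ hc
  have hCp : ∀ h ∈ S, cs (p h) ⊆ C := by
    intro h hh c hc
    exact Or.inl (Set.mem_biUnion hh (Or.inl hc))
  have hCq : ∀ h ∈ S, cs (q h) ⊆ C := by
    intro h hh c hc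
    exact Or.inl (Set.mem_biUnion hh (Or.inr hc))
  have hCμ : cs μ ⊆ C := fun c hc => Or.inr hc
  clear_value C
  clear hCdef
  set F₀ : IntermediateField E G := adjoin E C with hF₀def
  have hF₀F : F₀ ≤ F := adjoin_le_iff.mpr hCF
  have hsubC : C ⊆ (F₀ : Set G) := subset_adjoin E C
  have hmono : ∀ T₂ : Set G, F₀ ≤ adjoin E (C ∪ T₂) := fun T₂ => by
    rw [hF₀def]; exact adjoin.mono E C _ Set.subset_union_left
  have coeff_mem : ∀ r : Polynomial (↥F), cs r ⊆ C → ∀ i, ((r.coeff i : ↥F) : G) ∈ F₀ := by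
    intro r hr i
    rcases cs_coeff r i with h | h
    · exact hsubC (hr h)
    · rw [Set.mem_singleton_iff.mp h]
      exact F₀.zero_mem
  clear_value F₀
  -- membership of base-field elements in `F₀⟮x⟯`
  have base_mem : ∀ {c : G}, c ∈ F₀ → c ∈ adjoin (↥F₀) ({x} : Set G) := by
    intro c hc
    have h := (adjoin (↥F₀) ({x} : Set G)).algebraMap_mem ⟨c, hc⟩
    rwa [IntermediateField.algebraMap_apply] at h
  have aeval_mem : ∀ r : Polynomial (↥F), cs r ⊆ C →
      Polynomial.aeval x r ∈ adjoin (↥F₀) ({x} : Set G) := by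
    intro r hr
    have heq : Polynomial.aeval x r = (r.map (algebraMap (↥F) G)).eval x := by
      rw [Polynomial.aeval_def, Polynomial.eval_map]
    rw [heq]
    refine evalMemHelper _ ?_ (subset_adjoin _ _ rfl)
    intro i
    rw [Polynomial.coeff_map, IntermediateField.algebraMap_apply]
    exact base_mem (coeff_mem r hr i)
  have hmemS : ∀ h ∈ S, h ∈ adjoin (↥F₀) ({x} : Set G) := by
    intro h hh
    rw [hpq h hh]
    exact div_mem (aeval_mem _ (hCp h hh)) (aeval_mem _ (hCq h hh))
  have hFsub : ∀ a ∈ F, a ∈ adjoin (↥F₀) ({x} : Set G) := by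
    have hle : adjoin E (insert x S) ≤ (adjoin (↥F₀) ({x} : Set G)).restrictScalars E := by
      rw [adjoin_le_iff, coe_restrictScalars]
      intro y hy
      rcases hy with rfl | hy
      · exact subset_adjoin _ _ rfl
      · exact hmemS y hy
    intro a ha
    have h8 := hle (h2 ha)
    rwa [mem_restrictScalars] at h8
  by_cases halg : IsAlgebraic (↥F) x
  · -- algebraic case
    have hxint : IsIntegral (↥F) x := halg.isIntegral
    have hμmonic : (μ.map (algebraMap (↥F) G)).Monic := (minpoly.monic hxint).map _
    have hlift : μ.map (algebraMap (↥F) G) ∈ Polynomial.lifts (algebraMap (↥F₀) G) := by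
      rw [Polynomial.lifts_iff_coeff_lifts]
      intro n
      rw [Polynomial.coeff_map, IntermediateField.algebraMap_apply]
      exact ⟨⟨_, coeff_mem μ hCμ n⟩, by rw [IntermediateField.algebraMap_apply]⟩
    obtain ⟨μ₀, hμ₀map, -, hμ₀monic⟩ := Polynomial.lifts_and_natDegree_eq_and_monic hlift hμmonic
    have hint : IsIntegral (↥F₀) x := by
      refine ⟨μ₀, hμ₀monic, ?_⟩
      have h3 : Polynomial.eval₂ (algebraMap (↥F₀) G) x μ₀
          = (μ₀.map (algebraMap (↥F₀) G)).eval x := by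
        rw [Polynomial.eval_map]
      rw [h3, hμ₀map, Polynomial.eval_map, ← Polynomial.aeval_def, minpoly.aeval]
    have hfd : FiniteDimensional (↥F₀) ↥(adjoin (↥F₀) ({x} : Set G)) :=
      IntermediateField.adjoin.finiteDimensional hint
    set L : IntermediateField (↥F₀) G := adjoin (↥F₀) ({x} : Set G) with hLdef
    let M : Submodule (↥F₀) G :=
      { carrier := F
        add_mem' := fun ha hb => F.add_mem ha hb
        zero_mem' := F.zero_mem
        smul_mem' := fun c a ha => by
          rw [Algebra.smul_def, IntermediateField.algebraMap_apply]
          exact F.mul_mem (hF₀F c.2) ha }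
    let φ : ↥L →ₗ[↥F₀] G := L.val.toLinearMap
    have hMrange : M ≤ LinearMap.range φ := fun a ha => ⟨⟨a, hFsub a ha⟩, rfl⟩
    haveI : IsNoetherian (↥F₀) ↥L := IsNoetherian.iff_fg.mpr hfd
    have hMfg : M.FG := by
      have hfg1 : (Submodule.comap φ M).FG := IsNoetherian.noetherian _
      have hfg2 : Submodule.map φ (Submodule.comap φ M) = M := by
        rw [Submodule.map_comap_eq, inf_eq_right.mpr hMrange]
      exact hfg2 ▸ hfg1.map φ
    obtain ⟨T₂, hT₂⟩ := hMfg
    have hT₂F : (T₂ : Set G) ⊆ (F : Set G) := by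
      intro t ht
      have h6 : t ∈ M := hT₂ ▸ Submodule.subset_span ht
      exact h6
    refine ⟨C ∪ ↑T₂, hCfin.union T₂.finite_toSet, le_antisymm ?_ ?_⟩
    · rw [adjoin_le_iff]
      rintro c (hc | hc)
      · exact hCF hc
      · exact hT₂F hc
    · intro a ha
      have haM : a ∈ Submodule.span (↥F₀) (T₂ : Set G) := by
        rw [hT₂]; exact ha
      refine Submodule.span_induction ?_ ?_ ?_ ?_ haM
      · intro y hy
        exact subset_adjoin _ _ (Or.inr hy)
      · exact (adjoin E (C ∪ ↑T₂)).zero_mem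
      · intro y z _ _ hy hz
        exact add_mem hy hz
      · intro c y _ hy
        rw [Algebra.smul_def, IntermediateField.algebraMap_apply]
        exact mul_mem (hmono _ c.2) hy
  · -- transcendental case
    refine ⟨C, hCfin, ?_⟩
    rw [← hF₀def]
    refine le_antisymm hF₀F ?_
    intro a ha
    obtain ⟨p', q', ha'⟩ := (mem_adjoin_simple_iff (F := ↥F₀) a).mp (hFsub a ha)
    by_cases hq0 : Polynomial.aeval x q' = (0 : G)
    · rw [ha', hq0, div_zero]
      exact F₀.zero_mem
    · have heq : Polynomial.aeval x p' = a * Polynomial.aeval x q' := by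
        rw [ha', div_mul_cancel₀ _ hq0]
      set ι : ↥F₀ →+* ↥F := (IntermediateField.inclusion hF₀F).toRingHom with hι
      have hcomp : (algebraMap (↥F) G).comp ι = algebraMap (↥F₀) G := by
        ext y
        simp [hι, IntermediateField.coe_inclusion]
      have key_aeval : ∀ r : Polynomial (↥F₀),
          Polynomial.aeval x (r.map ι) = Polynomial.aeval x r := by
        intro r
        rw [Polynomial.aeval_def, Polynomial.aeval_def, Polynomial.eval₂_map, hcomp]
      have hPa : Polynomial.aeval x (p'.map ι - Polynomial.C (⟨a, ha⟩ : ↥F) * q'.map ι) = 0 := by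
        rw [map_sub, map_mul, Polynomial.aeval_C, key_aeval, key_aeval,
          IntermediateField.algebraMap_apply]
        rw [show ((⟨a, ha⟩ : ↥F) : G) = a from rfl, ← heq, sub_self]
      have hP0 : p'.map ι - Polynomial.C (⟨a, ha⟩ : ↥F) * q'.map ι = 0 := by
        by_contra hne
        exact halg ⟨_, hne, hPa⟩
      have hq'ne : q' ≠ 0 := fun h => hq0 (by rw [h, map_zero])
      obtain ⟨j, hj⟩ : ∃ j, q'.coeff j ≠ 0 := by
        by_contra hall
        push_neg at hall
        exact hq'ne (Polynomial.ext fun n => by rw [hall n, Polynomial.coeff_zero])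
      have hcoeff : ((p'.coeff j : ↥F₀) : G) = a * ((q'.coeff j : ↥F₀) : G) := by
        have h4 := congrArg (fun r => r.coeff j) hP0
        simp only [Polynomial.coeff_sub, Polynomial.coeff_C_mul, Polynomial.coeff_map,
          Polynomial.coeff_zero, sub_eq_zero] at h4
        have h5 := congrArg (fun y : ↥F => (y : G)) h4
        simpa [hι] using h5
      have hqjne : ((q'.coeff j : ↥F₀) : G) ≠ 0 := by
        simpa using hj
      have haeq : a = ((p'.coeff j : ↥F₀) : G) / ((q'.coeff j : ↥F₀) : G) :=
        (eq_div_iff hqjne).mpr hcoeff.symm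
      rw [haeq]
      exact div_mem (p'.coeff j).2 (q'.coeff j).2

universe u

/-- Auxiliary induction: over a single universe, every intermediate field of a finitely
generated extension is finitely generated (as a set of generators). -/
theorem auxFG (n : ℕ) : ∀ (E G : Type u) [Field E] [Field G] [Algebra E G]
    (g : Fin n → G), adjoin E (Set.range g) = ⊤ →
    ∀ F : IntermediateField E G, ∃ T : Set G, T.Finite ∧ adjoin E T = F := by
  induction n with
  | zero =>
    intro E G _ _ _ g htop F
    have hr : Set.range g = (∅ : Set G) := Set.range_eq_empty g
    rw [hr, adjoin_empty] at htop
    refine ⟨∅, Set.finite_empty, ?_⟩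
    rw [adjoin_empty]
    exact le_antisymm bot_le (le_top.trans htop.symm.le)
  | succ n ih =>
    intro E G _ _ _ g htop F
    have hrange : Set.range g = {g 0} ∪ Set.range (g ∘ Fin.succ) := by
      ext y
      constructor
      · rintro ⟨i, rfl⟩
        refine Fin.cases ?_ ?_ i
        · exact Or.inl rfl
        · intro j; exact Or.inr ⟨j, rfl⟩
      · rintro (rfl | ⟨j, rfl⟩)
        · exact ⟨0, rfl⟩
        · exact ⟨j.succ, rfl⟩
    have htop' : adjoin (↥(adjoin E ({g 0} : Set G))) (Set.range (g ∘ Fin.succ)) = ⊤ := by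
      apply restrictScalars_injective E
      rw [adjoin_adjoin_left, ← hrange, htop, restrictScalars_top]
    obtain ⟨T, hTfin, hT⟩ := ih (↥(adjoin E ({g 0} : Set G))) G (g ∘ Fin.succ) htop'
      (adjoin (↥(adjoin E ({g 0} : Set G))) (F : Set G))
    have hres1 : (adjoin (↥(adjoin E ({g 0} : Set G))) (F : Set G)).restrictScalars E
        = adjoin E (({g 0} : Set G) ∪ (F : Set G)) := adjoin_adjoin_left E _ _
    have hres2 : (adjoin (↥F) ({g 0} : Set G)).restrictScalars E
        = adjoin E ((F : Set G) ∪ ({g 0} : Set G)) := by rw [restrictScalars_adjoin]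
    have hc1 : adjoin E (({g 0} : Set G) ∪ (F : Set G))
        ≤ adjoin E ((F : Set G) ∪ ({g 0} : Set G)) := by
      rw [Set.union_comm]
    have h1 : ∀ h ∈ T, h ∈ adjoin (↥F) ({g 0} : Set G) := by
      intro h hh
      have m1 : h ∈ adjoin (↥(adjoin E ({g 0} : Set G))) (F : Set G) := by
        rw [← hT]; exact subset_adjoin _ _ hh
      have m2 : h ∈ (adjoin (↥(adjoin E ({g 0} : Set G))) (F : Set G)).restrictScalars E := by
        rwa [mem_restrictScalars]
      rw [hres1] at m2
      have m3 := hc1 m2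
      rw [← hres2] at m3
      rwa [mem_restrictScalars] at m3
    have h2 : F ≤ adjoin E (insert (g 0) T) := by
      intro a ha
      have m1 : a ∈ adjoin (↥(adjoin E ({g 0} : Set G))) T := by
        rw [hT]; exact subset_adjoin _ _ ha
      have m2 : a ∈ (adjoin (↥(adjoin E ({g 0} : Set G))) T).restrictScalars E := by
        rwa [mem_restrictScalars]
      rw [adjoin_adjoin_left, Set.singleton_union] at m2
      exact m2
    exact key_lemma F (g 0) T hTfin h1 h2

/-- every subextension of a finitely generated field extension is
finitely generated. -/
theorem subextension_of_finitely_generated_is_finitely_generated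
    (E G : Type*) [Field E] [Field G] [Algebra E G]
    (hfg : ∃ (n : ℕ) (g : Fin n → G),
      IntermediateField.adjoin E (Set.range g) = ⊤) :
    ∀ F : IntermediateField E G,
      ∃ (m : ℕ) (f : Fin m → G), (∀ i, f i ∈ F) ∧
        IntermediateField.adjoin E (Set.range f) = F := by
  obtain ⟨n, g, htop⟩ := hfg
  intro F
  have hbotF : adjoin E (∅ : Set G) ≤ F := adjoin_le_iff.mpr (Set.empty_subset _)
  have htop' : adjoin (↥(adjoin E (∅ : Set G))) (Set.range g) = ⊤ := by
    apply restrictScalars_injective E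
    rw [adjoin_adjoin_left, Set.empty_union, htop, restrictScalars_top]
  obtain ⟨T, hTfin, hT⟩ := auxFG n (↥(adjoin E (∅ : Set G))) G g htop'
    (IntermediateField.extendScalars hbotF)
  have hTF : adjoin E T = F := by
    have h9 := congrArg
      (fun X : IntermediateField (↥(adjoin E (∅ : Set G))) G => X.restrictScalars E) hT
    rw [adjoin_adjoin_left, Set.empty_union, extendScalars_restrictScalars] at h9
    exact h9
  haveI := hTfin.fintype
  refine ⟨Fintype.card T, fun i => ((Fintype.equivFin T).symm i : G), ?_, ?_⟩
  · intro i
    have hm := ((Fintype.equivFin T).symm i).2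
    have hsub : T ⊆ (F : Set G) := by rw [← hTF]; exact subset_adjoin E T
    exact hsub hm
  · have hr : Set.range (fun i => (((Fintype.equivFin T).symm i : T) : G)) = T := by
      ext y
      constructor
      · rintro ⟨i, rfl⟩; exact ((Fintype.equivFin T).symm i).2
      · intro hy; exact ⟨Fintype.equivFin T ⟨y, hy⟩, by simp⟩
    rw [hr, hTF]
end
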